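/- (Theorem 1, abstract form) Let p ≥ 2, n ≥ 1, σ > 0, ζ > 0, r > 0, β > 0, c₀ ≥ 2. Let θ* ∈ ℝ^{p×p} (parameters indexed by pairs (s,t)) with support S and sparsity s₀ = ‖θ*‖₀ ≥ 1. On a probability space, for each pair (s,t) let Z_{st}^{(1)},…,Z_{st}^{(n)} be i.i.d. zero-mean random variables satisfying the (σ,ζ)-MGF bound E[exp(η Z_{st}^{(1)})] ≤ exp(σ²η²/2) for |η| ≤ ζ. Suppose that for every outcome ω there is a convex, twice continuously differentiable function L_ω : ℝ^{p×p} → ℝ whose gradient at θ* has (s,t)-coordinate equal to −(1/n)Σ_{i=1}^n Z_{st}^{(i)}(ω), and which satisfies the restricted positive definite Hessian condition with constants (r, β) on the cone C_S for all θ with ‖θ − θ*‖₂ < r. For each ω let γ_n(ω) = ‖∇L_ω(θ*)‖_∞, let λ(ω) ∈ [2γ_n(ω), c₀γ_n(ω)] with λ(ω) > 0, and let θ̂(ω) be a global minimizer of θ ↦ L_ω(θ) + λ(ω)‖θ‖₁. If n > max( 6 ln p/(σ²ζ²), 13.5 c₀² r^{−2} β^{−2} σ² s₀ ln p ), then with probability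 at least 1 − 2p^{−1}, ‖θ̂ − θ*‖₂ ≤ 1.5 c₀ β^{−1} σ √(6 s₀ ln p / n). -/

import Mathlib

open MeasureTheory ProbabilityTheory Real

/-!
On the event that every coordinate of `∇L(θ*) = -(1/n) ∑ᵢ Z⁽ⁱ⁾` is at most
`t = σ √(6 ln p / n)` in absolute value, the argument is deterministic. Write `Δ = θ̂ - θ*`.
Optimality of `θ̂` and convexity of `L` and of `‖·‖₁` bound the directional derivative
`G(c) = ∇L(θ* + cΔ) Δ` by `λ (‖Δ_S‖₁ - ‖Δ_S̄‖₁)` for `0 ≤ c < 1`; together with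
`G(0) ≥ -γₙ ‖Δ‖₁` and `λ ≥ 2γₙ` this puts `Δ` in the cone `C_S`. On the cone the Hessian
condition gives `G(c) - G(0) ≥ β c ‖Δ‖₂²` as long as `c ‖Δ‖₂ < r`, hence
`β c ‖Δ‖₂² ≤ (3/2) λ ‖Δ_S‖₁ ≤ (3/2) λ √s₀ ‖Δ‖₂`, and letting `c ‖Δ‖₂` approach
`min(‖Δ‖₂, r)` yields `‖Δ‖₂ ≤ (3/2) λ √s₀ / β` once that bound is below `r`.

The event has probability at least `1 - 2/p`: for each of the `p²` coordinates a Chernoff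
bound with `η = t/σ² ≤ ζ` gives the tail `2 exp(-n t²/(2σ²)) = 2 p⁻³`.
-/

section LineDerivatives

variable {E : Type*} [NormedAddCommGroup E] [NormedSpace ℝ E] {L : E → ℝ}

theorem ConvexOn.add_fderiv_sub_le (hL : ConvexOn ℝ Set.univ L) {x : E}
    (hx : DifferentiableAt ℝ L x) (y : E) : L x + fderiv ℝ L x (y - x) ≤ L y := by
  have hline : ConvexOn ℝ Set.univ (L ∘ AffineMap.lineMap (k := ℝ) x y) := by
    simpa using hL.comp_affineMap (AffineMap.lineMap (k := ℝ) x y)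
  have hderiv : HasDerivAt (L ∘ AffineMap.lineMap (k := ℝ) x y) (fderiv ℝ L x (y - x)) 0 := by
    refine HasFDerivAt.comp_hasDerivAt (0 : ℝ) ?_ AffineMap.hasDerivAt_lineMap
    simpa using hx.hasFDerivAt
  have := hline.le_slope_of_hasDerivAt (Set.mem_univ 0) (Set.mem_univ 1) one_pos hderiv
  simp only [slope_def_field, Function.comp_apply, AffineMap.lineMap_apply_zero,
    AffineMap.lineMap_apply_one, sub_zero, div_one] at this
  linarith

theorem ContDiff.hasDerivAt_fderiv_lineMap (hL : ContDiff ℝ 2 L) (x y : E) (s : ℝ) :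
    HasDerivAt (fun s => fderiv ℝ L (AffineMap.lineMap (k := ℝ) x y s) (y - x))
      (fderiv ℝ (fderiv ℝ L) (AffineMap.lineMap (k := ℝ) x y s) (y - x) (y - x)) s := by
  have hL' : HasFDerivAt (fderiv ℝ L) (fderiv ℝ (fderiv ℝ L) (AffineMap.lineMap (k := ℝ) x y s))
      (AffineMap.lineMap (k := ℝ) x y s) :=
    ((hL.fderiv_right (m := 1) le_rfl).differentiable one_ne_zero _).hasFDerivAt
  exact ((ContinuousLinearMap.apply ℝ ℝ (y - x)).hasFDerivAt.comp _ hL').comp_hasDerivAt s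
    AffineMap.hasDerivAt_lineMap

end LineDerivatives

section SumAbs

variable {ι : Type*} [Fintype ι]

theorem ContinuousLinearMap.abs_apply_le_mul_sum_abs [DecidableEq ι] (f : (ι → ℝ) →L[ℝ] ℝ)
    {γ : ℝ} (hf : ∀ i, |f (Pi.single i 1)| ≤ γ) (v : ι → ℝ) : |f v| ≤ γ * ∑ i, |v i| := by
  have hv : f v = ∑ i, v i * f (Pi.single i 1) := by
    conv_lhs => rw [← Finset.univ_sum_single v]
    rw [map_sum]
    refine Finset.sum_congr rfl fun i _ => ?_
    rw [← smul_eq_mul, ← map_smul, ← Pi.single_smul, smul_eq_mul, mul_one]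
  rw [hv, Finset.mul_sum]
  refine (Finset.abs_sum_le_sum_abs _ _).trans (Finset.sum_le_sum fun i _ => ?_)
  rw [abs_mul, mul_comm]
  exact mul_le_mul_of_nonneg_right (hf i) (abs_nonneg _)

theorem sum_abs_sub_sum_abs_le [DecidableEq ι] {θ θ' : ι → ℝ} {S : Finset ι}
    (hθ : ∀ i ∉ S, θ i = 0) :
    ∑ i, |θ i| - ∑ i, |θ' i| ≤ ∑ i ∈ S, |θ' i - θ i| - ∑ i ∈ Sᶜ, |θ' i - θ i| := by
  rw [← Finset.sum_add_sum_compl S, ← Finset.sum_add_sum_compl S (fun i => |θ' i|)]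
  have hS : ∑ i ∈ S, |θ i| - ∑ i ∈ S, |θ' i| ≤ ∑ i ∈ S, |θ' i - θ i| := by
    rw [← Finset.sum_sub_distrib]
    exact Finset.sum_le_sum fun i _ => by
      simpa [abs_sub_comm] using abs_sub_abs_le_abs_sub (θ i) (θ' i)
  have hSc : ∑ i ∈ Sᶜ, |θ i| = 0 := Finset.sum_eq_zero fun i hi => by
    rw [hθ i (Finset.mem_compl.mp hi), abs_zero]
  have hSc' : ∑ i ∈ Sᶜ, |θ' i| = ∑ i ∈ Sᶜ, |θ' i - θ i| := Finset.sum_congr rfl fun i hi => by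
    rw [hθ i (Finset.mem_compl.mp hi), sub_zero]
  linarith

theorem sum_abs_lineMap_le (θ θ' : ι → ℝ) {c : ℝ} (hc0 : 0 ≤ c) (hc1 : c ≤ 1) :
    ∑ i, |AffineMap.lineMap θ θ' c i| ≤ (1 - c) * ∑ i, |θ i| + c * ∑ i, |θ' i| := by
  rw [Finset.mul_sum, Finset.mul_sum, ← Finset.sum_add_distrib]
  refine Finset.sum_le_sum fun i _ => ?_
  rw [AffineMap.lineMap_apply_module]
  simp only [Pi.add_apply, Pi.smul_apply, smul_eq_mul]
  calc |(1 - c) * θ i + c * θ' i| ≤ |(1 - c) * θ i| + |c * θ' i| := abs_add_le _ _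
    _ = (1 - c) * |θ i| + c * |θ' i| := by
      rw [abs_mul, abs_mul, abs_of_nonneg (sub_nonneg.mpr hc1), abs_of_nonneg hc0]

theorem sum_abs_le_sqrt_card_mul_sqrt_sum_sq (v : ι → ℝ) (S : Finset ι) :
    ∑ i ∈ S, |v i| ≤ √S.card * √(∑ i, v i ^ 2) := by
  rw [← Real.sqrt_mul (Nat.cast_nonneg _)]
  refine Real.le_sqrt_of_sq_le ?_
  calc (∑ i ∈ S, |v i|) ^ 2 ≤ S.card * ∑ i ∈ S, |v i| ^ 2 :=
        sq_sum_le_card_mul_sum_sq (s := S) (f := fun i => |v i|)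
    _ ≤ S.card * ∑ i, v i ^ 2 := by
      simp only [sq_abs]
      gcongr
      exact Finset.subset_univ S

theorem sqrt_sum_sq_lineMap_sub (θ θ' : ι → ℝ) {s : ℝ} (hs : 0 ≤ s) :
    √(∑ i, (AffineMap.lineMap θ θ' s i - θ i) ^ 2) = s * √(∑ i, (θ' i - θ i) ^ 2) := by
  have hsum : ∑ i, (AffineMap.lineMap θ θ' s i - θ i) ^ 2 = s ^ 2 * ∑ i, (θ' i - θ i) ^ 2 := by
    rw [Finset.mul_sum]
    refine Finset.sum_congr rfl fun i _ => ?_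
    simp only [AffineMap.lineMap_apply_module', Pi.add_apply, Pi.smul_apply, Pi.sub_apply,
      smul_eq_mul]
    ring
  rw [hsum, Real.sqrt_mul (sq_nonneg s), Real.sqrt_sq hs]

end SumAbs

section PenalizedMinimizer

variable {ι : Type*} [Fintype ι] [DecidableEq ι] {L : (ι → ℝ) → ℝ} {θstar θhat : ι → ℝ}
  {S : Finset ι} {lam γ β r : ℝ}

theorem sub_lineMap_le_of_forall_add_sum_abs_le (hsupp : ∀ i ∉ S, θstar i = 0) (hlam : 0 ≤ lam)
    (hmin : ∀ θ, L θhat + lam * ∑ i, |θhat i| ≤ L θ + lam * ∑ i, |θ i|)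
    {c : ℝ} (hc0 : 0 ≤ c) (hc1 : c ≤ 1) :
    L θhat - L (AffineMap.lineMap θstar θhat c) ≤
      (1 - c) * (lam * (∑ i ∈ S, |θhat i - θstar i| - ∑ i ∈ Sᶜ, |θhat i - θstar i|)) := by
  have hmin_c := hmin (AffineMap.lineMap θstar θhat c)
  have hconv := mul_le_mul_of_nonneg_left (sum_abs_lineMap_le θstar θhat hc0 hc1) hlam
  have hdecomp := mul_le_mul_of_nonneg_left (sum_abs_sub_sum_abs_le (θ' := θhat) hsupp)
    (mul_nonneg (sub_nonneg.mpr hc1) hlam)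
  linarith

theorem fderiv_lineMap_apply_sub_le (hconv : ConvexOn ℝ Set.univ L) (hdiff : Differentiable ℝ L)
    (hsupp : ∀ i ∉ S, θstar i = 0) (hlam : 0 ≤ lam)
    (hmin : ∀ θ, L θhat + lam * ∑ i, |θhat i| ≤ L θ + lam * ∑ i, |θ i|)
    {c : ℝ} (hc0 : 0 ≤ c) (hc1 : c < 1) :
    fderiv ℝ L (AffineMap.lineMap θstar θhat c) (θhat - θstar) ≤
      lam * (∑ i ∈ S, |θhat i - θstar i| - ∑ i ∈ Sᶜ, |θhat i - θstar i|) := by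
  have hgrad := hconv.add_fderiv_sub_le (hdiff (AffineMap.lineMap θstar θhat c)) θhat
  rw [← vsub_eq_sub θhat, AffineMap.right_vsub_lineMap, vsub_eq_sub, map_smul,
    smul_eq_mul] at hgrad
  have hval := sub_lineMap_le_of_forall_add_sum_abs_le hsupp hlam hmin hc0 hc1.le
  exact le_of_mul_le_mul_left (by linarith) (sub_pos.mpr hc1)

theorem sum_abs_compl_le_three_mul (hconv : ConvexOn ℝ Set.univ L) (hdiff : Differentiable ℝ L)
    (hsupp : ∀ i ∉ S, θstar i = 0) (hlam : 0 < lam)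
    (hmin : ∀ θ, L θhat + lam * ∑ i, |θhat i| ≤ L θ + lam * ∑ i, |θ i|)
    (hγ : ∀ i, |fderiv ℝ L θstar (Pi.single i 1)| ≤ γ) (hlamγ : 2 * γ ≤ lam) :
    ∑ i ∈ Sᶜ, |θhat i - θstar i| ≤ 3 * ∑ i ∈ S, |θhat i - θstar i| := by
  have hupper := fderiv_lineMap_apply_sub_le hconv hdiff hsupp hlam.le hmin le_rfl zero_lt_one
  rw [AffineMap.lineMap_apply_zero] at hupper
  have hlower := neg_le_of_abs_le
    ((fderiv ℝ L θstar).abs_apply_le_mul_sum_abs hγ (θhat - θstar))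
  rw [← Finset.sum_add_sum_compl S] at hlower
  simp only [Pi.sub_apply] at hlower
  nlinarith [Finset.sum_nonneg fun i (_ : i ∈ S) => abs_nonneg (θhat i - θstar i),
    Finset.sum_nonneg fun i (_ : i ∈ Sᶜ) => abs_nonneg (θhat i - θstar i)]

theorem mul_sum_sq_le_of_restricted_hessian (hconv : ConvexOn ℝ Set.univ L)
    (hsmooth : ContDiff ℝ 2 L) (hsupp : ∀ i ∉ S, θstar i = 0) (hlam : 0 < lam)
    (hmin : ∀ θ, L θhat + lam * ∑ i, |θhat i| ≤ L θ + lam * ∑ i, |θ i|)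
    (hγ : ∀ i, |fderiv ℝ L θstar (Pi.single i 1)| ≤ γ) (hlamγ : 2 * γ ≤ lam)
    (hRSC : ∀ θ : ι → ℝ, √(∑ i, (θ i - θstar i) ^ 2) < r →
      ∀ v : ι → ℝ, ∑ i ∈ Sᶜ, |v i| ≤ 3 * ∑ i ∈ S, |v i| →
        β * ∑ i, v i ^ 2 ≤ fderiv ℝ (fderiv ℝ L) θ v v)
    {c : ℝ} (hc0 : 0 < c) (hc1 : c < 1) (hcr : c * √(∑ i, (θhat i - θstar i) ^ 2) < r) :
    β * c * ∑ i, (θhat i - θstar i) ^ 2 ≤ 3 / 2 * lam * ∑ i ∈ S, |θhat i - θstar i| := by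
  have hdiff : Differentiable ℝ L := hsmooth.differentiable two_ne_zero
  have hderiv := hsmooth.hasDerivAt_fderiv_lineMap θstar θhat
  obtain ⟨ξ, ⟨hξ0, hξc⟩, hslope⟩ := exists_hasDerivAt_eq_slope _ _ hc0
    (fun s _ => (hderiv s).continuousAt.continuousWithinAt) (fun s _ => hderiv s)
  have hcurv := hRSC (AffineMap.lineMap θstar θhat ξ)
    (by rw [sqrt_sum_sq_lineMap_sub θstar θhat hξ0.le]
        exact lt_of_le_of_lt (mul_le_mul_of_nonneg_right hξc.le (Real.sqrt_nonneg _)) hcr)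
    (θhat - θstar) (sum_abs_compl_le_three_mul hconv hdiff hsupp hlam hmin hγ hlamγ)
  rw [hslope, sub_zero, le_div_iff₀ hc0, AffineMap.lineMap_apply_zero] at hcurv
  have hupper := fderiv_lineMap_apply_sub_le hconv hdiff hsupp hlam.le hmin hc0.le hc1
  have hlower := neg_le_of_abs_le
    ((fderiv ℝ L θstar).abs_apply_le_mul_sum_abs hγ (θhat - θstar))
  rw [← Finset.sum_add_sum_compl S] at hlower
  simp only [Pi.sub_apply] at hcurv hlower hupper
  have ha : 0 ≤ ∑ i ∈ S, |θhat i - θstar i| := Finset.sum_nonneg fun i _ => abs_nonneg _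
  have hb : 0 ≤ ∑ i ∈ Sᶜ, |θhat i - θstar i| := Finset.sum_nonneg fun i _ => abs_nonneg _
  linarith [mul_le_mul_of_nonneg_right hlamγ (add_nonneg ha hb), mul_nonneg hlam.le hb]

theorem sqrt_sum_sq_sub_le_of_restricted_hessian (hconv : ConvexOn ℝ Set.univ L)
    (hsmooth : ContDiff ℝ 2 L) (hsupp : ∀ i ∉ S, θstar i = 0) (hlam : 0 < lam)
    (hmin : ∀ θ, L θhat + lam * ∑ i, |θhat i| ≤ L θ + lam * ∑ i, |θ i|)
    (hγ : ∀ i, |fderiv ℝ L θstar (Pi.single i 1)| ≤ γ) (hlamγ : 2 * γ ≤ lam) (hβ : 0 < β)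
    (hRSC : ∀ θ : ι → ℝ, √(∑ i, (θ i - θstar i) ^ 2) < r →
      ∀ v : ι → ℝ, ∑ i ∈ Sᶜ, |v i| ≤ 3 * ∑ i ∈ S, |v i| →
        β * ∑ i, v i ^ 2 ≤ fderiv ℝ (fderiv ℝ L) θ v v)
    (hr : 3 / 2 * lam * √S.card / β < r) :
    √(∑ i, (θhat i - θstar i) ^ 2) ≤ 3 / 2 * lam * √S.card / β := by
  set D := √(∑ i, (θhat i - θstar i) ^ 2)
  set B := 3 / 2 * lam * √S.card / β
  by_contra! hBD
  have hB0 : 0 ≤ B := by positivity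
  have hD0 : 0 < D := hB0.trans_lt hBD
  obtain ⟨x, hBx, hx⟩ := exists_between (lt_min hBD hr)
  have hc0 : 0 < x / D := div_pos (hB0.trans_lt hBx) hD0
  have hcurv := mul_sum_sq_le_of_restricted_hessian hconv hsmooth hsupp hlam hmin hγ hlamγ hRSC
    hc0 ((div_lt_one hD0).mpr (hx.trans_le (min_le_left _ _)))
    (by rw [div_mul_cancel₀ x hD0.ne']; exact hx.trans_le (min_le_right _ _))
  have hCS := sum_abs_le_sqrt_card_mul_sqrt_sum_sq (θhat - θstar) S
  simp only [Pi.sub_apply] at hCS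
  have hsum : ∑ i, (θhat i - θstar i) ^ 2 = D ^ 2 :=
    (Real.sq_sqrt (Finset.sum_nonneg fun i _ => sq_nonneg (θhat i - θstar i))).symm
  have hxD : β * x * D ≤ 3 / 2 * lam * √S.card * D := by
    calc β * x * D = β * (x / D) * ∑ i, (θhat i - θstar i) ^ 2 := by
          rw [hsum]; field_simp
      _ ≤ 3 / 2 * lam * ∑ i ∈ S, |θhat i - θstar i| := hcurv
      _ ≤ 3 / 2 * lam * √S.card * D := by
        rw [mul_assoc _ √_]; exact mul_le_mul_of_nonneg_left hCS (by positivity)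
  have hxB : x ≤ B := by
    rw [le_div_iff₀ hβ, mul_comm]; exact le_of_mul_le_mul_right hxD hD0
  linarith

theorem sqrt_sum_sq_sub_le_of_abs_fderiv_le [Nonempty ι] {c₀ t : ℝ}
    (hconv : ConvexOn ℝ Set.univ L) (hsmooth : ContDiff ℝ 2 L) (hsupp : ∀ i ∉ S, θstar i = 0)
    (hlam : 0 < lam) (hmin : ∀ θ, L θhat + lam * ∑ i, |θhat i| ≤ L θ + lam * ∑ i, |θ i|)
    (hlam_γ : 2 * (⨆ i, |fderiv ℝ L θstar (Pi.single i 1)|) ≤ lam ∧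
      lam ≤ c₀ * ⨆ i, |fderiv ℝ L θstar (Pi.single i 1)|)
    (hc₀ : 0 ≤ c₀) (ht : ∀ i, |fderiv ℝ L θstar (Pi.single i 1)| ≤ t) (hβ : 0 < β)
    (hRSC : ∀ θ : ι → ℝ, √(∑ i, (θ i - θstar i) ^ 2) < r →
      ∀ v : ι → ℝ, ∑ i ∈ Sᶜ, |v i| ≤ 3 * ∑ i ∈ S, |v i| →
        β * ∑ i, v i ^ 2 ≤ fderiv ℝ (fderiv ℝ L) θ v v)
    (hr : 3 / 2 * (c₀ * t) * √S.card / β < r) :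
    √(∑ i, (θhat i - θstar i) ^ 2) ≤ 3 / 2 * (c₀ * t) * √S.card / β := by
  have hγ : ∀ i, |fderiv ℝ L θstar (Pi.single i 1)| ≤ ⨆ i, |fderiv ℝ L θstar (Pi.single i 1)| :=
    le_ciSup (Set.finite_range _).bddAbove
  have hlam_t : 3 / 2 * lam * √S.card / β ≤ 3 / 2 * (c₀ * t) * √S.card / β := by
    gcongr
    exact hlam_γ.2.trans (mul_le_mul_of_nonneg_left (ciSup_le ht) hc₀)
  exact (sqrt_sum_sq_sub_le_of_restricted_hessian hconv hsmooth hsupp hlam hmin hγ hlam_γ.1 hβ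
    hRSC (hlam_t.trans_lt hr)).trans hlam_t

end PenalizedMinimizer

section Rates

theorem mul_sqrt_div_le_sq_mul {x n σ ζ : ℝ} (hσ : 0 < σ) (hζ : 0 < ζ) (hn : 0 < n)
    (h : x / (σ ^ 2 * ζ ^ 2) < n) : σ * √(x / n) ≤ σ ^ 2 * ζ := by
  have hx : x / n ≤ (σ * ζ) ^ 2 := by
    rw [div_le_iff₀ hn]
    rw [div_lt_iff₀ (by positivity)] at h
    linarith
  calc σ * √(x / n) ≤ σ * (σ * ζ) := by gcongr; exact (sqrt_le_left (by positivity)).mpr hx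
    _ = σ ^ 2 * ζ := by ring

theorem exp_neg_mul_sq_div_eq_inv_pow {p n σ : ℝ} (hp : 1 ≤ p) (hn : 0 < n) (hσ : σ ≠ 0) :
    exp (-(n * (σ * √(6 * log p / n)) ^ 2) / (2 * σ ^ 2)) = (p ^ 3)⁻¹ := by
  have hexponent : -(n * (σ * √(6 * log p / n)) ^ 2) / (2 * σ ^ 2) = -log (p ^ 3) := by
    have : 0 ≤ log p := Real.log_nonneg hp
    rw [mul_pow, Real.sq_sqrt (by positivity), Real.log_pow]
    field_simp
    ring
  rw [hexponent, Real.exp_neg, Real.exp_log (by positivity)]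

theorem three_halves_mul_sqrt_div_eq (c₀ σ β x n : ℝ) {s : ℝ} (hs : 0 ≤ s) :
    3 / 2 * (c₀ * (σ * √(6 * x / n))) * √s / β = 1.5 * c₀ * β⁻¹ * σ * √(6 * s * x / n) := by
  have hsplit : √(6 * s * x / n) = √s * √(6 * x / n) := by
    rw [← Real.sqrt_mul hs]
    ring_nf
  rw [hsplit]
  norm_num
  ring

theorem mul_sqrt_div_lt_of_mul_lt {c₀ σ β r s x n : ℝ} (hr : 0 < r) (hn : 0 < n) (hs : 0 ≤ s)
    (hx : 0 ≤ x) (h : 13.5 * c₀ ^ 2 * r⁻¹ ^ 2 * β⁻¹ ^ 2 * σ ^ 2 * s * x < n) :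
    1.5 * c₀ * β⁻¹ * σ * √(6 * s * x / n) < r := by
  refine lt_of_pow_lt_pow_left₀ 2 hr.le ?_
  rw [mul_pow, Real.sq_sqrt (by positivity)]
  calc (1.5 * c₀ * β⁻¹ * σ) ^ 2 * (6 * s * x / n)
      = r ^ 2 * (13.5 * c₀ ^ 2 * r⁻¹ ^ 2 * β⁻¹ ^ 2 * σ ^ 2 * s * x) / n := by
        field_simp
        ring
    _ < r ^ 2 := by rw [div_lt_iff₀ hn]; gcongr

end Rates

section Concentration

variable {Ω : Type*} [MeasurableSpace Ω] {P : Measure Ω}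

theorem measureReal_lt_abs_le_exp_mul [IsFiniteMeasure P] {Y : Ω → ℝ} {η : ℝ} (ε : ℝ)
    (hη : 0 ≤ η)
    (hint : Integrable (fun ω => exp (η * Y ω)) P)
    (hint' : Integrable (fun ω => exp (-η * Y ω)) P) :
    P.real {ω | ε < |Y ω|} ≤ exp (-η * ε) * (mgf Y P η + mgf Y P (-η)) := by
  have hupper := measure_ge_le_exp_mul_mgf ε hη hint
  have hlower := measure_ge_le_exp_mul_mgf (X := -Y) ε hη (by simpa using hint')
  rw [mgf_neg] at hlower
  have hsub : {ω | ε < |Y ω|} ⊆ {ω | ε ≤ Y ω} ∪ {ω | ε ≤ (-Y) ω} := fun ω (hω : ε < |Y ω|) => by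
    rcases lt_abs.mp hω with h | h
    · exact Or.inl h.le
    · exact Or.inr h.le
  calc P.real {ω | ε < |Y ω|} ≤ P.real {ω | ε ≤ Y ω} + P.real {ω | ε ≤ (-Y) ω} :=
        (measureReal_mono hsub).trans (measureReal_union_le _ _)
    _ ≤ _ := by rw [mul_add]; exact add_le_add hupper hlower

theorem mgf_sum_le_exp_of_mgf_le {κ : Type*} [Fintype κ] {Z : κ → Ω → ℝ} {η σ : ℝ}
    (hmeas : ∀ i, Measurable (Z i)) (hindep : iIndepFun Z P)
    (hmgf : ∀ i, mgf (Z i) P η ≤ exp (σ ^ 2 * η ^ 2 / 2)) :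
    mgf (∑ i, Z i) P η ≤ exp (Fintype.card κ * (σ ^ 2 * η ^ 2 / 2)) := by
  rw [hindep.mgf_sum hmeas, Real.exp_nat_mul, ← Finset.card_univ, ← Finset.prod_const]
  exact Finset.prod_le_prod (fun i _ => mgf_nonneg) fun i _ => hmgf i

theorem measureReal_lt_abs_sum_le [IsProbabilityMeasure P] {κ : Type*} [Fintype κ] [Nonempty κ]
    {Z : κ → Ω → ℝ} {σ ζ t : ℝ} (hmeas : ∀ i, Measurable (Z i)) (hindep : iIndepFun Z P)
    (hint : ∀ i η, |η| ≤ ζ → Integrable (fun ω => exp (η * Z i ω)) P)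
    (hmgf : ∀ i η, |η| ≤ ζ → mgf (Z i) P η ≤ exp (σ ^ 2 * η ^ 2 / 2))
    (hσ : 0 < σ) (ht : 0 ≤ t) (htζ : t ≤ σ ^ 2 * ζ) :
    P.real {ω | Fintype.card κ * t < |∑ i, Z i ω|} ≤
      2 * exp (-(Fintype.card κ * t ^ 2) / (2 * σ ^ 2)) := by
  have hn : (0 : ℝ) < Fintype.card κ := by exact_mod_cast Fintype.card_pos
  set η := t / σ ^ 2
  have hη : 0 ≤ η := by positivity
  have hηζ : |η| ≤ ζ := by rwa [abs_of_nonneg hη, div_le_iff₀ (by positivity), mul_comm]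
  have hηζ' : |-η| ≤ ζ := by rwa [abs_neg]
  have hint_sum : ∀ s, |s| ≤ ζ → Integrable (fun ω => exp (s * (∑ i, Z i) ω)) P := fun s hs =>
    hindep.integrable_exp_mul_sum hmeas fun i _ => hint i s hs
  have hbound := measureReal_lt_abs_le_exp_mul (Y := ∑ i, Z i) (Fintype.card κ * t) hη
    (hint_sum η hηζ) (hint_sum (-η) hηζ')
  simp only [Finset.sum_apply] at hbound
  refine hbound.trans ?_
  calc exp (-η * (Fintype.card κ * t)) * (mgf (∑ i, Z i) P η + mgf (∑ i, Z i) P (-η))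
      ≤ exp (-η * (Fintype.card κ * t)) * (exp (Fintype.card κ * (σ ^ 2 * η ^ 2 / 2)) +
          exp (Fintype.card κ * (σ ^ 2 * (-η) ^ 2 / 2))) := by
        gcongr
        · exact mgf_sum_le_exp_of_mgf_le hmeas hindep fun i => hmgf i η hηζ
        · exact mgf_sum_le_exp_of_mgf_le hmeas hindep fun i => hmgf i (-η) hηζ'
    _ = 2 * exp (-(Fintype.card κ * t ^ 2) / (2 * σ ^ 2)) := by
        rw [neg_sq, ← two_mul, mul_left_comm, ← Real.exp_add]
        congr 2
        simp only [η]
        field_simp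
        ring

theorem one_sub_ofReal_le_measure_compl_iUnion [IsProbabilityMeasure P] {κ : Type*} [Fintype κ]
    {A : κ → Set Ω} {δ : ℝ}
    (h : ∀ i, P.real (A i) ≤ δ) :
    1 - ENNReal.ofReal (Fintype.card κ * δ) ≤ P (⋃ i, A i)ᶜ := by
  have hunion : P (⋃ i, A i) ≤ ENNReal.ofReal (Fintype.card κ * δ) := by
    rw [← ofReal_measureReal]
    refine ENNReal.ofReal_le_ofReal ((measureReal_iUnion_fintype_le A).trans ?_)
    simpa using Finset.sum_le_card_nsmul Finset.univ _ δ fun i _ => h i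
  rw [tsub_le_iff_right, ← measure_univ (μ := P)]
  exact (measure_univ_le_add_compl _).trans (by rw [add_comm]; gcongr)

theorem one_sub_le_measure_forall_abs_sum_le [IsProbabilityMeasure P] {ι κ : Type*} [Fintype ι]
    [Fintype κ] [Nonempty κ] {Z : ι → κ → Ω → ℝ} {σ ζ t : ℝ}
    (hmeas : ∀ j i, Measurable (Z j i)) (hindep : ∀ j, iIndepFun (Z j) P)
    (hint : ∀ j i η, |η| ≤ ζ → Integrable (fun ω => exp (η * Z j i ω)) P)
    (hmgf : ∀ j i η, |η| ≤ ζ → mgf (Z j i) P η ≤ exp (σ ^ 2 * η ^ 2 / 2))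
    (hσ : 0 < σ) (ht : 0 ≤ t) (htζ : t ≤ σ ^ 2 * ζ) :
    1 - ENNReal.ofReal (Fintype.card ι * (2 * exp (-(Fintype.card κ * t ^ 2) / (2 * σ ^ 2)))) ≤
      P {ω | ∀ j, |∑ i, Z j i ω| ≤ Fintype.card κ * t} := by
  have hgood : (⋃ j, {ω | Fintype.card κ * t < |∑ i, Z j i ω|})ᶜ =
      {ω | ∀ j, |∑ i, Z j i ω| ≤ Fintype.card κ * t} := by
    ext ω
    simp
  rw [← hgood]
  exact one_sub_ofReal_le_measure_compl_iUnion fun j =>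
    measureReal_lt_abs_sum_le (hmeas j) (hindep j) (hint j) (hmgf j) hσ ht htζ

end Concentration

theorem stmt_9_general {Ω : Type*} [MeasurableSpace Ω] (P : Measure Ω) [IsProbabilityMeasure P]
    (p n : ℕ) (hp : 2 ≤ p) (hn : 0 < n)
    (σ ζ r β c₀ : ℝ) (hσ : 0 < σ) (hζ : 0 < ζ) (hr : 0 < r) (hβ : 0 < β) (hc₀ : 2 ≤ c₀)
    (θstar : Fin p × Fin p → ℝ)
    (S : Finset (Fin p × Fin p)) (hS : S = Finset.univ.filter (fun st => θstar st ≠ 0))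
    (s₀ : ℕ) (hs₀def : s₀ = S.card)
    (Z : Fin p × Fin p → Fin n → Ω → ℝ)
    (hmeas : ∀ st i, Measurable (Z st i))
    (hindep : ∀ st, iIndepFun (Z st) P)
    (hint : ∀ st i, ∀ η : ℝ, |η| ≤ ζ →
      Integrable (fun ω => Real.exp (η * Z st i ω)) P)
    (hmgf : ∀ st i, ∀ η : ℝ, |η| ≤ ζ →
      ∫ ω, Real.exp (η * Z st i ω) ∂P ≤ Real.exp (σ ^ 2 * η ^ 2 / 2))
    (L : Ω → (Fin p × Fin p → ℝ) → ℝ)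
    (hconv : ∀ ω, ConvexOn ℝ Set.univ (L ω))
    (hsmooth : ∀ ω, ContDiff ℝ 2 (L ω))
    (hgrad : ∀ ω st, fderiv ℝ (L ω) θstar (Pi.single st 1) =
      -((1 / n : ℝ) * ∑ i, Z st i ω))
    (hRSC : ∀ ω, ∀ θ : Fin p × Fin p → ℝ,
      Real.sqrt (∑ st, (θ st - θstar st) ^ 2) < r →
      ∀ v : Fin p × Fin p → ℝ, (∑ st ∈ Sᶜ, |v st|) ≤ 3 * ∑ st ∈ S, |v st| →
        β * ∑ st, (v st) ^ 2 ≤ fderiv ℝ (fderiv ℝ (L ω)) θ v v)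
    (γn : Ω → ℝ) (hγn : ∀ ω, γn ω = ⨆ st, |fderiv ℝ (L ω) θstar (Pi.single st 1)|)
    (lam : Ω → ℝ) (hlam_pos : ∀ ω, 0 < lam ω)
    (hlam : ∀ ω, 2 * γn ω ≤ lam ω ∧ lam ω ≤ c₀ * γn ω)
    (θhat : Ω → Fin p × Fin p → ℝ)
    (hmin : ∀ ω θ, L ω (θhat ω) + lam ω * ∑ st, |θhat ω st| ≤
      L ω θ + lam ω * ∑ st, |θ st|)
    (hn1 : 6 * Real.log p / (σ ^ 2 * ζ ^ 2) < n)
    (hn2 : 13.5 * c₀ ^ 2 * r⁻¹ ^ 2 * β⁻¹ ^ 2 * σ ^ 2 * s₀ * Real.log p < n) :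
    1 - 2 * (p : ENNReal)⁻¹ ≤
      P {ω | Real.sqrt (∑ st, (θhat ω st - θstar st) ^ 2) ≤
        1.5 * c₀ * β⁻¹ * σ * Real.sqrt (6 * s₀ * Real.log p / n)} := by
  subst hs₀def
  have hn0 : (0 : ℝ) < n := by exact_mod_cast hn
  have : Nonempty (Fin n) := ⟨⟨0, hn⟩⟩
  have : Nonempty (Fin p) := ⟨⟨0, by omega⟩⟩
  set t := σ * √(6 * log p / n)
  have hsupp : ∀ st ∉ S, θstar st = 0 := fun st hst => by
    by_contra h
    exact hst (by simp [hS, h])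
  have hprob := one_sub_le_measure_forall_abs_sum_le hmeas hindep hint hmgf hσ (by positivity)
    (mul_sqrt_div_le_sq_mul hσ hζ hn0 hn1)
  have hfail : (p * p : ℝ) * (2 * (p ^ 3 : ℝ)⁻¹) = 2 / p := by field_simp
  rw [Fintype.card_fin, Fintype.card_prod, Fintype.card_fin, Nat.cast_mul,
    exp_neg_mul_sq_div_eq_inv_pow (by exact_mod_cast hp.trans' one_le_two) hn0 hσ.ne', hfail,
    ENNReal.ofReal_div_of_pos (by positivity)] at hprob
  refine le_trans (by simp [div_eq_mul_inv]) (hprob.trans (measure_mono fun ω hω => ?_))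
  have hgrad_t : ∀ st, |fderiv ℝ (L ω) θstar (Pi.single st 1)| ≤ t := fun st => by
    rw [hgrad, abs_neg, abs_mul, abs_of_pos (by positivity), one_div, inv_mul_le_iff₀ hn0]
    exact hω st
  have hlam_ω := hlam ω
  rw [hγn] at hlam_ω
  have hrate := three_halves_mul_sqrt_div_eq c₀ σ β (log p) n (Nat.cast_nonneg S.card)
  have hrate_lt := mul_sqrt_div_lt_of_mul_lt hr hn0 (Nat.cast_nonneg S.card)
    (Real.log_nonneg (by exact_mod_cast hp.trans' one_le_two)) hn2
  rw [← hrate] at hrate_lt ⊢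
  exact sqrt_sum_sq_sub_le_of_abs_fderiv_le (hconv ω) (hsmooth ω) hsupp (hlam_pos ω) (hmin ω)
    hlam_ω (by linarith) hgrad_t hβ (hRSC ω) hrate_lt

/-- (Theorem 1, abstract form) Estimation error of the ℓ₁-penalized joint MLE: with the
(σ,ζ)-MGF bound on the per-pair i.i.d. gradient summands and the restricted positive definite
Hessian condition, if `n > max(6 ln p/(σ²ζ²), 13.5 c₀² r⁻² β⁻² σ² s₀ ln p)` then with
probability at least `1 - 2p⁻¹`, `‖θ̂ - θ*‖₂ ≤ 1.5 c₀ β⁻¹ σ √(6 s₀ ln p/n)`. -/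
theorem stmt_9 {Ω : Type*} [MeasurableSpace Ω] (P : Measure Ω) [IsProbabilityMeasure P]
    (p n : ℕ) (hp : 2 ≤ p) (hn : 0 < n)
    (σ ζ r β c₀ : ℝ) (hσ : 0 < σ) (hζ : 0 < ζ) (hr : 0 < r) (hβ : 0 < β) (hc₀ : 2 ≤ c₀)
    (θstar : Fin p × Fin p → ℝ)
    (S : Finset (Fin p × Fin p)) (hS : S = Finset.univ.filter (fun st => θstar st ≠ 0))
    (s₀ : ℕ) (hs₀def : s₀ = S.card) (hs₀ : 1 ≤ s₀)
    (Z : Fin p × Fin p → Fin n → Ω → ℝ)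
    (hmeas : ∀ st i, Measurable (Z st i))
    (hindep : ∀ st, iIndepFun (Z st) P)
    (hident : ∀ st i i', P.map (Z st i) = P.map (Z st i'))
    (hmean : ∀ st i, ∫ ω, Z st i ω ∂P = 0)
    (hint : ∀ st i, ∀ η : ℝ, |η| ≤ ζ →
      Integrable (fun ω => Real.exp (η * Z st i ω)) P)
    (hmgf : ∀ st i, ∀ η : ℝ, |η| ≤ ζ →
      ∫ ω, Real.exp (η * Z st i ω) ∂P ≤ Real.exp (σ ^ 2 * η ^ 2 / 2))
    (L : Ω → (Fin p × Fin p → ℝ) → ℝ)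
    (hconv : ∀ ω, ConvexOn ℝ Set.univ (L ω))
    (hsmooth : ∀ ω, ContDiff ℝ 2 (L ω))
    (hgrad : ∀ ω st, fderiv ℝ (L ω) θstar (Pi.single st 1) =
      -((1 / n : ℝ) * ∑ i, Z st i ω))
    (hRSC : ∀ ω, ∀ θ : Fin p × Fin p → ℝ,
      Real.sqrt (∑ st, (θ st - θstar st) ^ 2) < r →
      ∀ v : Fin p × Fin p → ℝ, (∑ st ∈ Sᶜ, |v st|) ≤ 3 * ∑ st ∈ S, |v st| →
        β * ∑ st, (v st) ^ 2 ≤ fderiv ℝ (fderiv ℝ (L ω)) θ v v)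
    (γn : Ω → ℝ) (hγn : ∀ ω, γn ω = ⨆ st, |fderiv ℝ (L ω) θstar (Pi.single st 1)|)
    (lam : Ω → ℝ) (hlam_pos : ∀ ω, 0 < lam ω)
    (hlam : ∀ ω, 2 * γn ω ≤ lam ω ∧ lam ω ≤ c₀ * γn ω)
    (θhat : Ω → Fin p × Fin p → ℝ)
    (hmin : ∀ ω θ, L ω (θhat ω) + lam ω * ∑ st, |θhat ω st| ≤
      L ω θ + lam ω * ∑ st, |θ st|)
    (hn1 : 6 * Real.log p / (σ ^ 2 * ζ ^ 2) < n)
    (hn2 : 13.5 * c₀ ^ 2 * r⁻¹ ^ 2 * β⁻¹ ^ 2 * σ ^ 2 * s₀ * Real.log p < n) :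
    1 - 2 * (p : ENNReal)⁻¹ ≤
      P {ω | Real.sqrt (∑ st, (θhat ω st - θstar st) ^ 2) ≤
        1.5 * c₀ * β⁻¹ * σ * Real.sqrt (6 * s₀ * Real.log p / n)} :=
  stmt_9_general P p n hp hn σ ζ r β c₀ hσ hζ hr hβ hc₀ θstar S hS s₀ hs₀def Z hmeas hindep hint
    hmgf L hconv hsmooth hgrad hRSC γn hγn lam hlam_pos hlam θhat hmin hn1 hn2
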